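/- arXiv:2504.17316 — 3 statements merged into one kernel-verified Lean document; each statement's English description precedes it below -/
import Mathlib

section
/- The graph on the m * 2^(m-3) systoles, with edges given by the intersection relation, is 4-regular and hence has exactly m * 2^(m-3) * 2 = m * 2^(m-2) edges. -/
/-- Systoles: pairs `{i, a}` with `i ∈ ZMod m`, `a ∈ (ZMod 2)^(m-3)`. -/
def Systole (m : ℕ) : Type := ZMod m × (Fin (m - 3) → ZMod 2)

/-- `(a_2, ..., a_k) = (b_1, ..., b_{k-1})`. -/
def ShiftEq {k : ℕ} (a b : Fin k → ZMod 2) : Prop :=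
  ∀ (j : ℕ) (h : j + 1 < k), a ⟨j + 1, h⟩ = b ⟨j, Nat.lt_of_succ_lt h⟩

/-- The symmetric intersection relation on systoles. -/
def Intersects (m : ℕ) (s t : Systole m) : Prop :=
  (t.1 = s.1 + 1 ∧ ShiftEq s.2 t.2) ∨ (s.1 = t.1 + 1 ∧ ShiftEq t.2 s.2)

/-- The intersection graph on systoles. -/
def systoleGraph (m : ℕ) : SimpleGraph (Systole m) where
  Adj s t := s ≠ t ∧ Intersects m s t
  symm := ⟨fun s t ⟨h1, h2⟩ => ⟨h1.symm, h2.symm⟩⟩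
  loopless := ⟨fun s ⟨h, _⟩ => h rfl⟩

/-- The right neighbor of a systole with free last coordinate `ε`. -/
def rightN (m : ℕ) (s : Systole m) (ε : ZMod 2) : Systole m :=
  (s.1 + 1, fun j => if h : (j : ℕ) + 1 < m - 3 then s.2 ⟨(j : ℕ) + 1, h⟩ else ε)

/-- The left neighbor of a systole with free first coordinate `ε`. -/
def leftN (m : ℕ) (s : Systole m) (ε : ZMod 2) : Systole m :=
  (s.1 - 1, fun j => if (j : ℕ) = 0 then ε
    else s.2 ⟨(j : ℕ) - 1, Nat.lt_of_le_of_lt (Nat.pred_le _) j.2⟩)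

lemma shiftEq_rightN (m : ℕ) (s : Systole m) (ε : ZMod 2) :
    ShiftEq s.2 (rightN m s ε).2 := by
  intro j h
  simp only [rightN, dif_pos h]

lemma shiftEq_leftN (m : ℕ) (s : Systole m) (ε : ZMod 2) :
    ShiftEq (leftN m s ε).2 s.2 := by
  intro j h
  simp only [leftN]
  rw [if_neg (by omega)]
  congr 1

lemma zmod_two_ne_zero (m : ℕ) (hm : 5 ≤ m) : (2 : ZMod m) ≠ 0 := by
  intro h
  haveI : NeZero m := ⟨by omega⟩
  have h2 : ((2 : ℕ) : ZMod m) = 0 := by exact_mod_cast h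
  have := (ZMod.natCast_eq_zero_iff 2 m).mp h2
  have := Nat.le_of_dvd (by norm_num) this
  omega

lemma adj_iff (m : ℕ) (hm : 5 ≤ m) (s t : Systole m) :
    (systoleGraph m).Adj s t ↔ ∃ ε : ZMod 2, t = rightN m s ε ∨ t = leftN m s ε := by
  haveI : Fact (1 < m) := ⟨by omega⟩
  constructor
  · rintro ⟨hne, h | h⟩
    · obtain ⟨h1, h2⟩ := h
      refine ⟨t.2 ⟨m - 4, by omega⟩, Or.inl ?_⟩
      refine Prod.ext h1 ?_
      funext j
      simp only [rightN]
      split_ifs with hj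
      · exact (h2 j hj).symm
      · have hj' : j = (⟨m - 4, by omega⟩ : Fin (m - 3)) := Fin.ext (by simp only [Fin.val_mk]; omega)
        rw [hj']
    · obtain ⟨h1, h2⟩ := h
      refine ⟨t.2 ⟨0, by omega⟩, Or.inr ?_⟩
      refine Prod.ext (eq_sub_of_add_eq h1.symm) ?_
      funext j
      simp only [leftN]
      split_ifs with hj
      · have hj' : j = (⟨0, by omega⟩ : Fin (m - 3)) := Fin.ext (by simp only [Fin.val_mk]; omega)
        rw [hj']
      · have hj1 : ((j : ℕ) - 1) + 1 < m - 3 := by omega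
        have h3 := h2 ((j : ℕ) - 1) hj1
        have hj' : (⟨(j : ℕ) - 1 + 1, hj1⟩ : Fin (m - 3)) = j := Fin.ext (by simp only [Fin.val_mk]; omega)
        rw [hj'] at h3
        exact h3
  · rintro ⟨ε, rfl | rfl⟩
    · refine ⟨?_, Or.inl ⟨rfl, shiftEq_rightN m s ε⟩⟩
      intro h
      have : s.1 = s.1 + 1 := congrArg Prod.fst h
      simp only [left_eq_add] at this
      exact one_ne_zero this
    · refine ⟨?_, Or.inr ⟨by show s.1 = s.1 - 1 + 1; ring, shiftEq_leftN m s ε⟩⟩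
      intro h
      have h1 : s.1 = s.1 - 1 := congrArg Prod.fst h
      have : (1 : ZMod m) = 0 := by linear_combination h1
      exact one_ne_zero this

lemma rightN_ne_leftN (m : ℕ) (hm : 5 ≤ m) (s : Systole m) (ε ε' : ZMod 2) :
    rightN m s ε ≠ leftN m s ε' := by
  intro h
  have h1 : s.1 + 1 = s.1 - 1 := congrArg Prod.fst h
  exact zmod_two_ne_zero m hm (by linear_combination h1)

lemma rightN_inj (m : ℕ) (hm : 5 ≤ m) (s : Systole m) (ε ε' : ZMod 2) (h : ε ≠ ε') :
    rightN m s ε ≠ rightN m s ε' := by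
  intro he
  have := congrFun (congrArg Prod.snd he) ⟨m - 4, by omega⟩
  simp only [rightN] at this
  rw [dif_neg (by omega), dif_neg (by omega)] at this
  exact h this

lemma leftN_inj (m : ℕ) (hm : 5 ≤ m) (s : Systole m) (ε ε' : ZMod 2) (h : ε ≠ ε') :
    leftN m s ε ≠ leftN m s ε' := by
  intro he
  have := congrFun (congrArg Prod.snd he) ⟨0, by omega⟩
  simp only [leftN, if_pos rfl] at this
  exact h this

lemma neighborSet_eq (m : ℕ) (hm : 5 ≤ m) (s : Systole m) :
    (systoleGraph m).neighborSet s =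
      {rightN m s 0, rightN m s 1, leftN m s 0, leftN m s 1} := by
  ext t
  simp only [SimpleGraph.mem_neighborSet, adj_iff m hm, Set.mem_insert_iff,
    Set.mem_singleton_iff]
  constructor
  · have h2 : ∀ x : ZMod 2, x = 0 ∨ x = 1 := by decide
    rintro ⟨ε, h | h⟩ <;> rcases h2 ε with rfl | rfl <;> tauto
  · rintro (rfl | rfl | rfl | rfl)
    exacts [⟨0, Or.inl rfl⟩, ⟨1, Or.inl rfl⟩, ⟨0, Or.inr rfl⟩, ⟨1, Or.inr rfl⟩]

lemma nat_card_neighborSet (m : ℕ) (hm : 5 ≤ m) (s : Systole m) :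
    Nat.card ((systoleGraph m).neighborSet s) = 4 := by
  rw [neighborSet_eq m hm s, Nat.card_coe_set_eq]
  haveI : DecidableEq (Systole m) :=
    inferInstanceAs (DecidableEq (ZMod m × (Fin (m - 3) → ZMod 2)))
  have h01 : (0 : ZMod 2) ≠ 1 := by decide
  rw [Set.ncard_insert_of_notMem (by
        simp only [Set.mem_insert_iff, Set.mem_singleton_iff, not_or]
        exact ⟨rightN_inj m hm s 0 1 h01, rightN_ne_leftN m hm s 0 0,
          rightN_ne_leftN m hm s 0 1⟩)
      (Set.toFinite _),
    Set.ncard_insert_of_notMem (by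
        simp only [Set.mem_insert_iff, Set.mem_singleton_iff, not_or]
        exact ⟨rightN_ne_leftN m hm s 1 0, rightN_ne_leftN m hm s 1 1⟩)
      (Set.toFinite _),
    Set.ncard_insert_of_notMem (by
        simp only [Set.mem_singleton_iff]
        exact leftN_inj m hm s 0 1 h01)
      (Set.toFinite _),
    Set.ncard_singleton]

/-- For `m ≥ 5`, the intersection graph on the `m * 2^(m-3)` systoles is
4-regular, and hence has exactly `m * 2^(m-2)` edges. -/
theorem systoleGraph_four_regular_edge_count (m : ℕ) (hm : 5 ≤ m) :
    (∀ s : Systole m, Nat.card ((systoleGraph m).neighborSet s) = 4) ∧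
    Nat.card ((systoleGraph m).edgeSet) = m * 2 ^ (m - 2) := by
  haveI : NeZero m := ⟨by omega⟩
  haveI : Fintype (Systole m) :=
    inferInstanceAs (Fintype (ZMod m × (Fin (m - 3) → ZMod 2)))
  haveI : DecidableEq (Systole m) :=
    inferInstanceAs (DecidableEq (ZMod m × (Fin (m - 3) → ZMod 2)))
  haveI : DecidableRel (systoleGraph m).Adj := Classical.decRel _
  refine ⟨nat_card_neighborSet m hm, ?_⟩
  have hdeg : ∀ s : Systole m, (systoleGraph m).degree s = 4 := by
    intro s
    rw [← SimpleGraph.card_neighborSet_eq_degree, ← Nat.card_eq_fintype_card]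
    exact nat_card_neighborSet m hm s
  have hsum := SimpleGraph.sum_degrees_eq_twice_card_edges (systoleGraph m)
  simp only [hdeg, Finset.sum_const, smul_eq_mul, Finset.card_univ] at hsum
  have hV : Fintype.card (Systole m) = m * 2 ^ (m - 3) := by
    rw [← Nat.card_eq_fintype_card]
    have h1 : Nat.card (Systole m) = Nat.card (ZMod m × (Fin (m - 3) → ZMod 2)) := rfl
    rw [h1, Nat.card_eq_fintype_card]
    simp [ZMod.card]
  have hE : Nat.card ((systoleGraph m).edgeSet) = (systoleGraph m).edgeFinset.card := by
    rw [Nat.card_eq_fintype_card, SimpleGraph.edgeFinset, Set.toFinset_card]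
  rw [hE]
  rw [hV] at hsum
  have hpow : 2 ^ (m - 2) = 2 * 2 ^ (m - 3) := by
    rw [← pow_succ']
    congr 1
    omega
  have h2E : 2 * (systoleGraph m).edgeFinset.card = 2 * (m * 2 ^ (m - 2)) := by
    rw [← hsum, hpow]
    ring
  exact Nat.eq_of_mul_eq_mul_left (by norm_num) h2E
end

section
/- The intersection graph of systoles is vertex-transitive: for any two systoles {i,a} and {j,b} there is a graph automorphism mapping one to the other. In particular, the maps (i,a) ↦ (i+1, a) (cyclic shift of the first index combined with the appropriate relabeling of the tuples) and coordinate translations a ↦ a + c generate a transitive automorphism group. -/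
/-- Auxiliary translation pattern. -/
def transF (m : ℕ) (i : ZMod m) (c : Fin (m - 3) → ZMod 2) : ZMod m → Fin (m - 3) → ZMod 2 :=
  fun x j => if h : (x + (j.val : ZMod m) - i).val < m - 3
    then c ⟨(x + (j.val : ZMod m) - i).val, h⟩ else 0

lemma transF_shift {m : ℕ} (i : ZMod m) (c : Fin (m - 3) → ZMod 2) (x : ZMod m)
    (j : ℕ) (h : j + 1 < m - 3) :
    transF m i c x ⟨j + 1, h⟩ = transF m i c (x + 1) ⟨j, Nat.lt_of_succ_lt h⟩ := by
  unfold transF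
  have e : x + (((j + 1 : ℕ)) : ZMod m) - i = (x + 1) + ((j : ℕ) : ZMod m) - i := by
    push_cast; ring
  simp only [Fin.val_mk]
  rw [e]

lemma transF_self {m : ℕ} (hm : 5 ≤ m) (i : ZMod m) (c : Fin (m - 3) → ZMod 2)
    (j : Fin (m - 3)) : transF m i c i j = c j := by
  haveI : NeZero m := ⟨by omega⟩
  unfold transF
  have e : i + ((j.val : ℕ) : ZMod m) - i = ((j.val : ℕ) : ZMod m) := by ring
  rw [e, ZMod.val_cast_of_lt (by omega : j.val < m)]
  rw [dif_pos j.isLt]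

lemma shiftEq_add {m : ℕ} (f : ZMod m → Fin (m - 3) → ZMod 2)
    (hf : ∀ x (j : ℕ) (h : j + 1 < m - 3),
      f x ⟨j + 1, h⟩ = f (x + 1) ⟨j, Nat.lt_of_succ_lt h⟩)
    (x : ZMod m) (a b : Fin (m - 3) → ZMod 2) :
    ShiftEq (fun j => a j + f x j) (fun j => b j + f (x + 1) j) ↔ ShiftEq a b := by
  constructor
  · intro h j hj
    have := h j hj
    simp only at this
    rw [hf x j hj] at this
    exact add_right_cancel this
  · intro h j hj
    simp only
    rw [hf x j hj, h j hj]

/-- The intersection graph of systoles is vertex-transitive: for any two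
systoles there is an automorphism (a bijection of systoles preserving the
intersection relation) mapping one to the other.  In particular the cyclic
shift `(i, a) ↦ (i + 1, a)` of the first index is such an automorphism. -/
theorem systoleGraph_vertex_transitive (m : ℕ) (hm : 5 ≤ m) :
    (∀ a b : Systole m,
      Intersects m a b ↔
        Intersects m ((a.1 + 1, a.2) : Systole m) ((b.1 + 1, b.2) : Systole m)) ∧
    (∀ s t : Systole m, ∃ φ : Systole m ≃ Systole m,
      (∀ a b : Systole m, Intersects m a b ↔ Intersects m (φ a) (φ b)) ∧
      φ s = t) := by
  haveI : NeZero m := ⟨by omega⟩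
  constructor
  · intro a b
    unfold Intersects
    simp only
    constructor
    · rintro (⟨h1, h2⟩ | ⟨h1, h2⟩)
      · exact Or.inl ⟨by rw [h1], h2⟩
      · exact Or.inr ⟨by rw [h1], h2⟩
    · rintro (⟨h1, h2⟩ | ⟨h1, h2⟩)
      · exact Or.inl ⟨add_right_cancel h1, h2⟩
      · exact Or.inr ⟨add_right_cancel h1, h2⟩
  · intro s t
    set d : ZMod m := t.1 - s.1 with hd
    set f : ZMod m → Fin (m - 3) → ZMod 2 :=
      transF m s.1 (fun j => t.2 j - s.2 j) with hfdef
    have hf : ∀ x (j : ℕ) (h : j + 1 < m - 3),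
        f x ⟨j + 1, h⟩ = f (x + 1) ⟨j, Nat.lt_of_succ_lt h⟩ := by
      intro x j h
      exact transF_shift _ _ x j h
    refine ⟨⟨fun p => (p.1 + d, fun j => p.2 j + f p.1 j),
            fun p => (p.1 - d, fun j => p.2 j - f (p.1 - d) j), ?_, ?_⟩, ?_, ?_⟩
    · intro p
      refine Prod.ext ?_ ?_
      · simp
      · funext j
        simp
    · intro p
      refine Prod.ext ?_ ?_
      · simp
      · funext j
        simp
    · intro a b
      unfold Intersects
      show ((b.1 = a.1 + 1 ∧ ShiftEq a.2 b.2) ∨ (a.1 = b.1 + 1 ∧ ShiftEq b.2 a.2)) ↔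
        ((b.1 + d = a.1 + d + 1 ∧ ShiftEq (fun j => a.2 j + f a.1 j) (fun j => b.2 j + f b.1 j)) ∨
         (a.1 + d = b.1 + d + 1 ∧ ShiftEq (fun j => b.2 j + f b.1 j) (fun j => a.2 j + f a.1 j)))
      constructor
      · rintro (⟨h1, h2⟩ | ⟨h1, h2⟩)
        · refine Or.inl ⟨by rw [h1, add_right_comm], ?_⟩
          rw [h1]
          exact (shiftEq_add f hf a.1 a.2 b.2).mpr h2
        · refine Or.inr ⟨by rw [h1, add_right_comm], ?_⟩
          rw [h1]
          exact (shiftEq_add f hf b.1 b.2 a.2).mpr h2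
      · rintro (⟨h1, h2⟩ | ⟨h1, h2⟩)
        · rw [add_right_comm] at h1
          have h1' : b.1 = a.1 + 1 := add_right_cancel h1
          refine Or.inl ⟨h1', ?_⟩
          rw [h1'] at h2
          exact (shiftEq_add f hf a.1 a.2 b.2).mp h2
        · rw [add_right_comm] at h1
          have h1' : a.1 = b.1 + 1 := add_right_cancel h1
          refine Or.inr ⟨h1', ?_⟩
          rw [h1'] at h2
          exact (shiftEq_add f hf b.1 b.2 a.2).mp h2
    · refine Prod.ext ?_ ?_
      · show s.1 + d = t.1
        simp [hd]
      · funext j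
        show s.2 j + transF m s.1 (fun j => t.2 j - s.2 j) s.1 j = t.2 j
        rw [transF_self hm]
        ring
end

section
/- Each systole {i, (a_1,...,a_{m-3})} corresponds to a cyclic sequence of exactly 4 realised squares, and two distinct systoles share at most one realised square. -/
/-- A realised square of the `m`-cube: varying coordinates `{i, i+1}`. -/
def IsRealisedSquare (m : ℕ) (S : Set (ZMod m → ZMod 2)) : Prop :=
  ∃ (i : ZMod m) (f : ZMod m → ZMod 2),
    S = {v | ∀ k, k ≠ i → k ≠ i + 1 → v k = f k}

/-- The realised square with varying coordinates `{i, i+1}` through which the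
systole `{i, a}` passes: coordinates `i+2+j` are fixed to `a j` and coordinate
`i-1` is fixed to `ε`. -/
def sqPlus (m : ℕ) (i : ZMod m) (a : Fin (m - 3) → ZMod 2) (ε : ZMod 2) :
    Set (ZMod m → ZMod 2) :=
  {v | (∀ j : Fin (m - 3), v (i + 2 + (j : ℕ)) = a j) ∧ v (i - 1) = ε}

/-- The realised square with varying coordinates `{i-1, i}` through which the
systole `{i, a}` passes: coordinates `i+2+j` are fixed to `a j` and coordinate
`i+1` is fixed to `ε`. -/
def sqMinus (m : ℕ) (i : ZMod m) (a : Fin (m - 3) → ZMod 2) (ε : ZMod 2) :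
    Set (ZMod m → ZMod 2) :=
  {v | (∀ j : Fin (m - 3), v (i + 2 + (j : ℕ)) = a j) ∧ v (i + 1) = ε}

/-- The (cyclic sequence of) realised squares of the systole `{i, a}`. -/
def systoleSquares (m : ℕ) (s : Systole m) : Set (Set (ZMod m → ZMod 2)) :=
  {S | ∃ ε : ZMod 2, S = sqPlus m s.1 s.2 ε ∨ S = sqMinus m s.1 s.2 ε}

/-!
A realised square is a subcube with free coordinates `{c, c + 1}`, and since `ZMod 2` is
nontrivial a subcube determines its free coordinates and its fixed values. Reading the fixed
values cyclically from `c + 2`, `sqPlus i a ε` is the square at `c = i` with word `a ++ [ε]` and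
`sqMinus i a ε` the one at `c = i - 1` with word `ε :: a`. So the four squares of a systole are
distinct, and a square shared by distinct systoles `{i, a}`, `{i', a'}` is `sqPlus` of one and
`sqMinus` of the other, say with `i' = i + 1`; then `ε` is forced to be the last letter of `a'`.
Both orientations cannot occur at once, since `2 ≠ 0` in `ZMod m`.
-/

open Function Set

section Subcube

variable {ι β : Type*}

def subcube (F : Set ι) (f : ι → β) : Set (ι → β) := {v | ∀ k ∉ F, v k = f k}

theorem self_mem_subcube (F : Set ι) (f : ι → β) : f ∈ subcube F f := fun _ _ => rfl

theorem subset_of_subcube_eq [Nontrivial β] {F F' : Set ι} {f f' : ι → β}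
    (h : subcube F f = subcube F' f') : F ⊆ F' := by
  classical
  intro k hk
  by_contra hk'
  obtain ⟨b, hb⟩ := exists_ne (f k)
  have hf : f k = f' k := (h ▸ self_mem_subcube F f) k hk'
  have hu : update f k b ∈ subcube F f := fun l hl =>
    update_of_ne (ne_of_mem_of_not_mem hk hl).symm _ _
  rw [h] at hu
  exact hb ((update_self k b f).symm.trans (hu k hk') |>.trans hf.symm)

theorem subcube_eq_subcube_iff [Nontrivial β] {F F' : Set ι} {f f' : ι → β} :
    subcube F f = subcube F' f' ↔ F = F' ∧ EqOn f f' Fᶜ := by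
  refine ⟨fun h => ?_, ?_⟩
  · obtain rfl : F = F' := (subset_of_subcube_eq h).antisymm (subset_of_subcube_eq h.symm)
    exact ⟨rfl, fun k hk => (h ▸ self_mem_subcube F f) k hk⟩
  rintro ⟨rfl, hf⟩
  ext v
  exact forall₂_congr fun k hk => by rw [hf hk]

end Subcube

section SquareOfWord

variable {m : ℕ} {β : Type*}

theorem ZMod.natCast_ne_zero_of_pos_of_lt {d : ℕ} (h0 : 0 < d) (hd : d < m) :
    (d : ZMod m) ≠ 0 := by
  rw [Ne, ZMod.natCast_eq_zero_iff]
  exact Nat.not_dvd_of_pos_of_lt h0 hd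

theorem eq_of_pair_add_one_eq_pair_add_one (hm : 3 ≤ m) {c c' : ZMod m}
    (h : ({c, c + 1} : Set (ZMod m)) = {c', c' + 1}) : c = c' := by
  have h1 : ((1 : ℕ) : ZMod m) ≠ 0 := ZMod.natCast_ne_zero_of_pos_of_lt (by omega) (by omega)
  have h2 : ((2 : ℕ) : ZMod m) ≠ 0 := ZMod.natCast_ne_zero_of_pos_of_lt (by omega) (by omega)
  have hc : c ∈ ({c', c' + 1} : Set (ZMod m)) := h ▸ mem_insert c _
  have hc' : c' ∈ ({c, c + 1} : Set (ZMod m)) := h.symm ▸ mem_insert c' _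
  simp only [mem_insert_iff, mem_singleton_iff] at hc hc'
  push_cast at h1 h2
  grind

def fixedCoord (c : ZMod m) (j : Fin (m - 3 + 1)) : ZMod m := c + 2 + (j : ℕ)

theorem injective_fixedCoord (hm : 3 ≤ m) (c : ZMod m) : Injective (fixedCoord c) := by
  intro j j' h
  have h' : ((j : ℕ) : ZMod m) = (j' : ℕ) := add_left_cancel h
  rw [ZMod.natCast_eq_natCast_iff', Nat.mod_eq_of_lt (by omega), Nat.mod_eq_of_lt (by omega)] at h'
  exact Fin.ext h'

theorem range_fixedCoord (hm : 3 ≤ m) (c : ZMod m) : range (fixedCoord c) = {c, c + 1}ᶜ := by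
  have : NeZero m := ⟨by omega⟩
  ext k
  simp only [mem_range, fixedCoord, mem_compl_iff, mem_insert_iff, mem_singleton_iff, not_or]
  constructor
  · rintro ⟨j, rfl⟩
    have h2 := ZMod.natCast_ne_zero_of_pos_of_lt (m := m) (d := 2 + j) (by omega) (by omega)
    have h1 := ZMod.natCast_ne_zero_of_pos_of_lt (m := m) (d := 1 + j) (by omega) (by omega)
    push_cast at h1 h2
    exact ⟨fun h => h2 (by linear_combination h), fun h => h1 (by linear_combination h)⟩
  · rintro ⟨hc, hc1⟩
    have hd0 : (k - c).val ≠ 0 := fun h => hc (sub_eq_zero.mp ((ZMod.val_eq_zero _).mp h))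
    have hd1 : (k - c).val ≠ 1 := fun h =>
      hc1 (sub_eq_iff_eq_add'.mp ((ZMod.val_eq_one (by omega) _).mp h))
    have hlt := ZMod.val_lt (k - c)
    refine ⟨⟨(k - c).val - 2, by omega⟩, ?_⟩
    have : (((k - c).val - 2 : ℕ) : ZMod m) = (k - c).val - 2 := by
      rw [Nat.cast_sub (by omega), Nat.cast_ofNat]
    simp only [this, ZMod.natCast_zmod_val]
    ring

/-- The square with free coordinates `c, c + 1` whose other coordinates, read cyclically from
`c + 2`, spell `w`. Words have length `m - 3 + 1` rather than `m - 2` so that they can be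
`Fin.snoc a ε` and `Fin.cons ε a`. -/
def squareOfWord (c : ZMod m) (w : Fin (m - 3 + 1) → β) : Set (ZMod m → β) :=
  {v | ∀ j, v (fixedCoord c j) = w j}

theorem squareOfWord_eq_subcube (hm : 3 ≤ m) (c : ZMod m) (w : Fin (m - 3 + 1) → β)
    (g : ZMod m → β) : squareOfWord c w = subcube {c, c + 1} (extend (fixedCoord c) w g) := by
  have hfixed : ∀ k, k ∉ ({c, c + 1} : Set (ZMod m)) ↔ k ∈ range (fixedCoord c) := by
    simp [range_fixedCoord hm]
  ext v
  simp only [squareOfWord, subcube, mem_ofPred_eq, hfixed, forall_mem_range,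
    (injective_fixedCoord hm c).extend_apply]

theorem squareOfWord_inj [Nontrivial β] (hm : 3 ≤ m) {c c' : ZMod m}
    {w w' : Fin (m - 3 + 1) → β} :
    squareOfWord c w = squareOfWord c' w' ↔ c = c' ∧ w = w' := by
  refine ⟨fun h => ?_, by rintro ⟨rfl, rfl⟩; rfl⟩
  inhabit β
  rw [squareOfWord_eq_subcube hm c w default, squareOfWord_eq_subcube hm c' w' default,
    subcube_eq_subcube_iff] at h
  obtain ⟨hpair, hfixed⟩ := h
  obtain rfl := eq_of_pair_add_one_eq_pair_add_one hm hpair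
  refine ⟨rfl, funext fun j => ?_⟩
  have := hfixed (range_fixedCoord hm c ▸ mem_range_self j)
  rwa [(injective_fixedCoord hm c).extend_apply, (injective_fixedCoord hm c).extend_apply] at this

theorem isRealisedSquare_squareOfWord (hm : 3 ≤ m) (c : ZMod m) (w : Fin (m - 3 + 1) → ZMod 2) :
    IsRealisedSquare m (squareOfWord c w) := by
  refine ⟨c, extend (fixedCoord c) w 0, ?_⟩
  rw [squareOfWord_eq_subcube hm c w 0]
  ext v
  simp [subcube]

end SquareOfWord

section Systole

variable {m : ℕ} {i i' : ZMod m} {a a' : Fin (m - 3) → ZMod 2} {ε ε' : ZMod 2}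

theorem sqPlus_eq_squareOfWord (hm : 3 ≤ m) :
    sqPlus m i a ε = squareOfWord i (Fin.snoc a ε) := by
  have hlast : i + 2 + ((m - 3 : ℕ) : ZMod m) = i - 1 := by
    rw [Nat.cast_sub hm, ZMod.natCast_self]; ring
  ext v
  simp only [sqPlus, squareOfWord, fixedCoord, Fin.forall_fin_succ', Fin.snoc_castSucc,
    Fin.snoc_last, Fin.val_castSucc, Fin.val_last, hlast, mem_ofPred_eq]

theorem sqMinus_eq_squareOfWord :
    sqMinus m i a ε = squareOfWord (i - 1) (Fin.cons ε a) := by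
  have hzero : i - 1 + 2 + (((0 : Fin (m - 3 + 1)) : ℕ) : ZMod m) = i + 1 := by
    rw [Fin.val_zero, Nat.cast_zero]; ring
  have hsucc (j : Fin (m - 3)) : i - 1 + 2 + ((j.succ : ℕ) : ZMod m) = i + 2 + (j : ℕ) := by
    rw [Fin.val_succ]; push_cast; ring
  ext v
  simp only [sqMinus, squareOfWord, fixedCoord, Fin.forall_fin_succ, Fin.cons_zero,
    Fin.cons_succ, hzero, hsucc, mem_ofPred_eq]
  exact and_comm

theorem sqPlus_inj (hm : 3 ≤ m) :
    sqPlus m i a ε = sqPlus m i' a' ε' ↔ i = i' ∧ a = a' ∧ ε = ε' := by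
  rw [sqPlus_eq_squareOfWord hm, sqPlus_eq_squareOfWord hm, squareOfWord_inj hm, Fin.snoc_inj]

theorem sqMinus_inj (hm : 3 ≤ m) :
    sqMinus m i a ε = sqMinus m i' a' ε' ↔ i = i' ∧ a = a' ∧ ε = ε' := by
  rw [sqMinus_eq_squareOfWord, sqMinus_eq_squareOfWord, squareOfWord_inj hm, sub_left_inj,
    Fin.cons_inj, and_comm (a := ε = ε')]

theorem sqPlus_eq_sqMinus (hm : 4 ≤ m) (h : sqPlus m i a ε = sqMinus m i' a' ε') :
    i' = i + 1 ∧ ε = a' ⟨m - 4, by omega⟩ := by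
  rw [sqPlus_eq_squareOfWord (by omega), sqMinus_eq_squareOfWord,
    squareOfWord_inj (by omega)] at h
  obtain ⟨hi, hw⟩ := h
  refine ⟨sub_eq_iff_eq_add.mp hi.symm, ?_⟩
  have hlast : Fin.last (m - 3) = Fin.succ ⟨m - 4, by omega⟩ :=
    Fin.ext (show m - 3 = m - 4 + 1 by omega)
  have := congrFun hw (Fin.last _)
  rwa [Fin.snoc_last, hlast, Fin.cons_succ] at this

theorem sqPlus_ne_sqMinus (hm : 4 ≤ m) : sqPlus m i a ε ≠ sqMinus m i a' ε' := fun h => by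
  have h1 : ((1 : ℕ) : ZMod m) ≠ 0 := ZMod.natCast_ne_zero_of_pos_of_lt (by omega) (by omega)
  have hi := (sqPlus_eq_sqMinus hm h).1
  exact h1 (by linear_combination -hi)

theorem systoleSquares_eq_range (s : Systole m) :
    systoleSquares m s = range (Sum.elim (sqPlus m s.1 s.2) (sqMinus m s.1 s.2)) := by
  ext S
  simp [systoleSquares, eq_comm, exists_or]

theorem ncard_systoleSquares (hm : 4 ≤ m) (s : Systole m) : (systoleSquares m s).ncard = 4 := by
  rw [systoleSquares_eq_range, ncard_range_of_injective]
  · simp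
  exact Injective.sumElim (fun _ _ h => ((sqPlus_inj (by omega)).1 h).2.2)
    (fun _ _ h => ((sqMinus_inj (by omega)).1 h).2.2) fun _ _ => sqPlus_ne_sqMinus hm

theorem isRealisedSquare_of_mem_systoleSquares (hm : 3 ≤ m) {s : Systole m}
    {S : Set (ZMod m → ZMod 2)} (hS : S ∈ systoleSquares m s) : IsRealisedSquare m S := by
  obtain ⟨ε, rfl | rfl⟩ := hS
  · rw [sqPlus_eq_squareOfWord hm]; exact isRealisedSquare_squareOfWord hm _ _
  · rw [sqMinus_eq_squareOfWord]; exact isRealisedSquare_squareOfWord hm _ _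

theorem eq_sqPlus_of_mem_inter_systoleSquares (hm : 4 ≤ m) {s t : Systole m} (hst : s ≠ t)
    {S : Set (ZMod m → ZMod 2)} (hS : S ∈ systoleSquares m s ∩ systoleSquares m t) :
    (t.1 = s.1 + 1 ∧ S = sqPlus m s.1 s.2 (t.2 ⟨m - 4, by omega⟩)) ∨
      (s.1 = t.1 + 1 ∧ S = sqPlus m t.1 t.2 (s.2 ⟨m - 4, by omega⟩)) := by
  obtain ⟨⟨ε, rfl | rfl⟩, ⟨δ, h | h⟩⟩ := hS
  · obtain ⟨hi, ha, -⟩ := (sqPlus_inj (by omega)).1 h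
    exact absurd (Prod.ext hi ha) hst
  · obtain ⟨hi, hε⟩ := sqPlus_eq_sqMinus hm h
    exact Or.inl ⟨hi, hε ▸ rfl⟩
  · obtain ⟨hi, hδ⟩ := sqPlus_eq_sqMinus hm h.symm
    exact Or.inr ⟨hi, h.trans (hδ ▸ rfl)⟩
  · obtain ⟨hi, ha, -⟩ := (sqMinus_inj (by omega)).1 h
    exact absurd (Prod.ext hi ha) hst

theorem subsingleton_inter_systoleSquares (hm : 4 ≤ m) {s t : Systole m} (hst : s ≠ t) :
    (systoleSquares m s ∩ systoleSquares m t).Subsingleton := by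
  have h2 : ((2 : ℕ) : ZMod m) ≠ 0 := ZMod.natCast_ne_zero_of_pos_of_lt (by omega) (by omega)
  intro S hS S' hS'
  rcases eq_sqPlus_of_mem_inter_systoleSquares hm hst hS with ⟨hi, rfl⟩ | ⟨hi, rfl⟩ <;>
    rcases eq_sqPlus_of_mem_inter_systoleSquares hm hst hS' with ⟨hi', rfl⟩ | ⟨hi', rfl⟩
  · rfl
  · exact absurd (by linear_combination -hi - hi') h2
  · exact absurd (by linear_combination -hi - hi') h2
  · rfl

end Systole

/-- For `m ≥ 5`, each systole corresponds to exactly 4 realised squares, and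
two distinct systoles share at most one realised square. -/
theorem systole_four_squares (m : ℕ) (hm : 5 ≤ m) :
    (∀ s : Systole m,
      (systoleSquares m s).ncard = 4 ∧
      ∀ S ∈ systoleSquares m s, IsRealisedSquare m S) ∧
    (∀ s t : Systole m, s ≠ t →
      (systoleSquares m s ∩ systoleSquares m t).ncard ≤ 1) := by
  refine ⟨fun s => ⟨ncard_systoleSquares (by omega) s,
    fun S => isRealisedSquare_of_mem_systoleSquares (by omega)⟩, fun s t hst => ?_⟩
  have hS := subsingleton_inter_systoleSquares (by omega) hst
  exact (ncard_le_one hS.finite).2 fun S hS₁ S' hS₂ => hS hS₁ hS₂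
end
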